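/- Let y ∈ (1,√3) ∪ (√3,∞), set a = y², C₁ = 2y⁶ + (3/4)y⁴, C₂ = (9/4)C₁ + (25/32)y⁸ + (3/2)(C₁^{2/3}·y^{8/3} + C₁^{1/3}·y^{16/3}), C₃ = (13/3)y⁴ + 18y² + 2C₂ + 11, V₁ = max{100, 8y²}, V₂ = max{V₁, (3/2)y⁴, √(2C₁)} and V₃ = max{V₂, 2 + 2y²/(1+2y), 2 + 2y⁴/(1+2y²)}. Then for every real v ≥ V₃ one has |G(v,y) − 1 − (3−y²)/(2v)| < C₃/v², where G(v,y) := v·∫_1^{√(v/(v−2))} ((v+y²)/(v+y²x²))^{(v+1)/2} dx. -/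

import Mathlib

/-! With `t = y² (x² - 1) / (v + y²)` the integrand of `G` is `(1 + t) ^ (-(v + 1) / 2)`, and the
elementary bounds `1 - p t ≤ (1 + t) ^ (-p) ≤ 1 - p t + p t² + (p t)²` replace it by a quadratic
polynomial in `x`, up to an error governed by the largest value `τ ≈ 2 y² / v²` of `t` on the
interval of integration. The polynomial integrates exactly to a cubic in `δ = √(v / (v - 2)) - 1`,
and the expansion `δ = w + 3 w² / 2 + O(w³)` in `w = 1 / v` gives
`G(v, y) = 1 + (3 - y²) / (2 v) + O(1 / v²)` with explicit constants, both of which `C₃`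
dominates. -/

open MeasureTheory Real intervalIntegral

/-- The comparison function `G(v, y)`. -/
noncomputable def G (v y : ℝ) : ℝ :=
  v * ∫ x in (1 : ℝ)..Real.sqrt (v / (v - 2)),
    ((v + y ^ 2) / (v + y ^ 2 * x ^ 2)) ^ ((v + 1) / 2)

namespace Real

lemma inv_one_add_le {t : ℝ} (ht : 0 ≤ t) : (1 + t)⁻¹ ≤ 1 - t + t ^ 2 := by
  rw [inv_le_iff_one_le_mul₀ (by linarith)]
  nlinarith [pow_nonneg ht 3]

lemma exp_neg_le_one_sub_add_sq {u : ℝ} (hu : 0 ≤ u) : exp (-u) ≤ 1 - u + u ^ 2 :=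
  calc exp (-u) = (exp u)⁻¹ := exp_neg u
    _ ≤ (1 + u)⁻¹ := inv_anti₀ (by linarith) (by linarith [add_one_le_exp u])
    _ ≤ 1 - u + u ^ 2 := inv_one_add_le hu

lemma sub_sq_le_log_one_add {t : ℝ} (ht : 0 ≤ t) : t - t ^ 2 ≤ log (1 + t) := by
  linarith [inv_one_add_le ht, one_sub_inv_le_log_of_pos (by linarith : 0 < 1 + t)]

lemma one_sub_mul_le_one_add_rpow_neg {t p : ℝ} (ht : 0 ≤ t) (hp : 0 ≤ p) :
    1 - p * t ≤ (1 + t) ^ (-p) := by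
  have hlog : p * log (1 + t) ≤ p * t :=
    mul_le_mul_of_nonneg_left (by linarith [log_le_sub_one_of_pos (by linarith : 0 < 1 + t)]) hp
  rw [rpow_def_of_pos (by linarith)]
  linarith [add_one_le_exp (log (1 + t) * -p)]

lemma one_add_rpow_neg_le {t p : ℝ} (ht : 0 ≤ t) (hp : 0 ≤ p) :
    (1 + t) ^ (-p) ≤ 1 - p * t + p * t ^ 2 + (p * t) ^ 2 := by
  have hu0 : 0 ≤ p * log (1 + t) := mul_nonneg hp (log_nonneg (by linarith))
  have hu_le : p * log (1 + t) ≤ p * t :=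
    mul_le_mul_of_nonneg_left (by linarith [log_le_sub_one_of_pos (by linarith : 0 < 1 + t)]) hp
  have hu_ge : p * (t - t ^ 2) ≤ p * log (1 + t) :=
    mul_le_mul_of_nonneg_left (sub_sq_le_log_one_add ht) hp
  calc (1 + t) ^ (-p) = exp (-(p * log (1 + t))) := by
        rw [rpow_def_of_pos (by linarith)]; ring_nf
    _ ≤ 1 - p * log (1 + t) + (p * log (1 + t)) ^ 2 := exp_neg_le_one_sub_add_sq hu0
    _ ≤ 1 - p * t + p * t ^ 2 + (p * t) ^ 2 := by
        nlinarith [pow_le_pow_left₀ hu0 hu_le 2]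

end Real

lemma integral_sub_mul_sq_sub_one (K c X : ℝ) :
    ∫ x in (1 : ℝ)..X, (K - c * (x ^ 2 - 1)) = K * (X - 1) - c * ((X - 1) ^ 2 * (X + 2) / 3) := by
  rw [integral_sub intervalIntegrable_const ((by fun_prop : Continuous _).intervalIntegrable _ _),
    intervalIntegral.integral_const_mul, integral_sub ((continuous_pow 2).intervalIntegrable _ _)
      intervalIntegrable_const, integral_pow]
  simp only [intervalIntegral.integral_const, smul_eq_mul]
  ring

lemma div_rpow_eq_one_add_rpow_neg {v a x p : ℝ} (hv : 0 < v) (ha : 0 ≤ a) :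
    ((v + a) / (v + a * x ^ 2)) ^ p = (1 + a * (x ^ 2 - 1) / (v + a)) ^ (-p) := by
  have hva : 0 < v + a := by linarith
  have hvax : 0 < v + a * x ^ 2 := by positivity
  have h : 1 + a * (x ^ 2 - 1) / (v + a) = ((v + a) / (v + a * x ^ 2))⁻¹ := by
    field_simp; ring
  rw [h, rpow_neg (by positivity), inv_rpow (by positivity), inv_inv]

theorem integral_div_rpow_bounds {v a p X τ : ℝ} (hv : 0 < v) (ha : 0 ≤ a) (hp : 0 ≤ p)
    (hX : 1 ≤ X) (hτ : a * (X ^ 2 - 1) / (v + a) ≤ τ) :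
    (X - 1) - p * a / (v + a) * ((X - 1) ^ 2 * (X + 2) / 3)
        ≤ ∫ x in (1 : ℝ)..X, ((v + a) / (v + a * x ^ 2)) ^ p ∧
      ∫ x in (1 : ℝ)..X, ((v + a) / (v + a * x ^ 2)) ^ p
        ≤ (1 + p * τ ^ 2 + (p * τ) ^ 2) * (X - 1)
          - p * a / (v + a) * ((X - 1) ^ 2 * (X + 2) / 3) := by
  have hva : 0 < v + a := by linarith
  have hf : IntervalIntegrable (fun x : ℝ => ((v + a) / (v + a * x ^ 2)) ^ p) volume 1 X := by
    refine Continuous.intervalIntegrable ?_ _ _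
    refine (continuous_const.div (by fun_prop) fun x => ?_).rpow_const fun x => Or.inr hp
    exact (by positivity : 0 < v + a * x ^ 2).ne'
  have hquad (K : ℝ) :
      IntervalIntegrable (fun x : ℝ => K - p * a / (v + a) * (x ^ 2 - 1)) volume 1 X :=
    (by fun_prop : Continuous _).intervalIntegrable _ _
  have ht (x : ℝ) (hx : x ∈ Set.Icc 1 X) :
      0 ≤ a * (x ^ 2 - 1) / (v + a) ∧ a * (x ^ 2 - 1) / (v + a) ≤ τ := by
    have hx2 : 1 ≤ x ^ 2 := one_le_pow₀ hx.1
    have hxX : x ^ 2 ≤ X ^ 2 := pow_le_pow_left₀ (by linarith [hx.1]) hx.2 2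
    exact ⟨div_nonneg (mul_nonneg ha (by linarith)) hva.le,
      (div_le_div_of_nonneg_right (mul_le_mul_of_nonneg_left (sub_le_sub_right hxX 1) ha)
        hva.le).trans hτ⟩
  have hpt (x : ℝ) : p * (a * (x ^ 2 - 1) / (v + a)) = p * a / (v + a) * (x ^ 2 - 1) := by
    ring
  constructor
  · calc _ = ∫ x in (1 : ℝ)..X, (1 - p * a / (v + a) * (x ^ 2 - 1)) := by
          rw [integral_sub_mul_sq_sub_one, one_mul]
      _ ≤ _ := integral_mono_on hX (hquad 1) hf fun x hx => by
          rw [div_rpow_eq_one_add_rpow_neg hv ha, ← hpt]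
          exact Real.one_sub_mul_le_one_add_rpow_neg (ht x hx).1 hp
  · rw [← integral_sub_mul_sq_sub_one]
    refine integral_mono_on hX hf (hquad _) fun x hx => ?_
    obtain ⟨ht0, htτ⟩ := ht x hx
    rw [div_rpow_eq_one_add_rpow_neg hv ha, ← hpt]
    have := Real.one_add_rpow_neg_le ht0 hp
    have := pow_le_pow_left₀ ht0 htτ 2
    have := pow_le_pow_left₀ (mul_nonneg hp ht0) (mul_le_mul_of_nonneg_left htτ hp) 2
    nlinarith

section Expansion

variable {v a w X δ c τ : ℝ}

lemma sub_one_bounds_of_sq_mul_eq_one (hw0 : 0 < w) (hw : w ≤ 1 / 100) (hX0 : 0 ≤ X)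
    (hX : X ^ 2 * (1 - 2 * w) = 1) :
    w + 3 / 2 * w ^ 2 ≤ X - 1 ∧ X - 1 ≤ w + 3 / 2 * w ^ 2 + 21 * w ^ 3 := by
  have h12 : 0 < 1 - 2 * w := by linarith
  have hchain (n : ℕ) : w ^ (n + 1) ≤ w ^ n / 100 := by
    rw [pow_succ]; nlinarith [pow_pos hw0 n]
  have hw3 := pow_pos hw0 3
  have hw4 := pow_pos hw0 4
  have hw5 := pow_pos hw0 5
  have hw6 := pow_pos hw0 6
  constructor
  · have hsq : (1 + w + 3 / 2 * w ^ 2) ^ 2 ≤ X ^ 2 :=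
      le_of_mul_le_mul_right (by rw [hX]; nlinarith) h12
    linarith [(pow_le_pow_iff_left₀ (by positivity) hX0 two_ne_zero).mp hsq]
  · have hsq : X ^ 2 ≤ (1 + w + 3 / 2 * w ^ 2 + 21 * w ^ 3) ^ 2 :=
      le_of_mul_le_mul_right (by rw [hX]; linarith [hchain 3, hchain 4, hchain 5, hchain 6]) h12
    linarith [(pow_le_pow_iff_left₀ hX0 (by positivity) two_ne_zero).mp hsq]

lemma half_succ_mul_div_add_bounds (ha : 0 ≤ a) (hv : 0 < v) (hvw : v * w = 1) :
    a * (1 - a * w) / 2 ≤ (v + 1) / 2 * a / (v + a) ∧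
      (v + 1) / 2 * a / (v + a) ≤ a * (1 + w) / 2 := by
  have hva : 0 < v + a := by linarith
  have hw0 : 0 < w := by nlinarith
  constructor
  · have key : a * (1 - a * w) / 2 * (v + a) = a * v / 2 - a ^ 3 * w / 2 := by
      linear_combination (-a ^ 2 / 2) * hvw
    rw [le_div_iff₀ hva, key]; nlinarith [mul_nonneg (pow_nonneg ha 3) hw0.le]
  · have key : a * (1 + w) / 2 * (v + a) = (v + 1) / 2 * a + a ^ 2 * (1 + w) / 2 := by
      linear_combination (a / 2) * hvw
    rw [div_le_iff₀ hva, key]; nlinarith [mul_nonneg (pow_nonneg ha 2) hw0.le]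

lemma cubic_term_le (ha : 0 ≤ a) (hw0 : 0 < w) (hw : w ≤ 1 / 100) (hvw : v * w = 1)
    (hc0 : 0 ≤ c) (hc : c ≤ a * (1 + w) / 2) (hδ0 : 0 ≤ δ)
    (hδ : δ ≤ w + 3 / 2 * w ^ 2 + 21 * w ^ 3) :
    v * (c * (δ ^ 2 * (δ + 3) / 3)) ≤ a * w / 2 + 5 / 2 * a * w ^ 2 := by
  have hchain (n : ℕ) : w ^ (n + 1) ≤ w ^ n / 100 := by
    rw [pow_succ]; nlinarith [pow_pos hw0 n]
  have hvδ : v * δ ≤ 1 + 3 / 2 * w + 21 * w ^ 2 := by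
    have key : v * (w + 3 / 2 * w ^ 2 + 21 * w ^ 3) = 1 + 3 / 2 * w + 21 * w ^ 2 := by
      linear_combination (1 + 3 / 2 * w + 21 * w ^ 2) * hvw
    nlinarith
  have hpoly : (1 + 3 / 2 * w + 21 * w ^ 2) * ((1 + w) * ((w + 3 / 2 * w ^ 2 + 21 * w ^ 3)
      * (w + 3 / 2 * w ^ 2 + 21 * w ^ 3 + 3))) ≤ 3 * w + 15 * w ^ 2 := by
    linarith [hchain 2, hchain 3, hchain 4, hchain 5, hchain 6, hchain 7, hchain 8,
      pow_pos hw0 2, pow_pos hw0 3]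
  have hδδ : δ * (δ + 3)
      ≤ (w + 3 / 2 * w ^ 2 + 21 * w ^ 3) * (w + 3 / 2 * w ^ 2 + 21 * w ^ 3 + 3) := by
    nlinarith
  calc v * (c * (δ ^ 2 * (δ + 3) / 3)) = (v * δ) * (c * (δ * (δ + 3))) / 3 := by ring
    _ ≤ (1 + 3 / 2 * w + 21 * w ^ 2) * (a * (1 + w) / 2 * ((w + 3 / 2 * w ^ 2 + 21 * w ^ 3)
          * (w + 3 / 2 * w ^ 2 + 21 * w ^ 3 + 3))) / 3 := by
        gcongr
    _ ≤ a * w / 2 + 5 / 2 * a * w ^ 2 := by nlinarith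

lemma le_cubic_term (ha : 0 ≤ a) (hw0 : 0 < w) (haw : a * w ≤ 1 / 8) (hvw : v * w = 1)
    (hc : a * (1 - a * w) / 2 ≤ c) (hδ : w + 3 / 2 * w ^ 2 ≤ δ) :
    a * w / 2 - a ^ 2 * w ^ 2 / 2 ≤ v * (c * (δ ^ 2 * (δ + 3) / 3)) := by
  have hc0 : 0 ≤ a * (1 - a * w) / 2 := by nlinarith
  have hvδ : 1 ≤ v * δ := by nlinarith
  have hδδ : 3 * w ≤ δ * (δ + 3) := by nlinarith
  calc a * w / 2 - a ^ 2 * w ^ 2 / 2 = 1 * (a * (1 - a * w) / 2 * (3 * w)) / 3 := by ring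
    _ ≤ (v * δ) * (c * (δ * (δ + 3))) / 3 := by
        gcongr
        exact hc0.trans hc
    _ = v * (c * (δ ^ 2 * (δ + 3) / 3)) := by ring

lemma remainder_le (ha : 0 ≤ a) (hw0 : 0 < w) (hw : w ≤ 1 / 100) (hvw : v * w = 1)
    (hτ : τ * ((1 - 2 * w) * (v + a)) = 2 * a * w) (hvδ : v * δ ≤ 51 / 50) :
    v * (((v + 1) / 2 * τ ^ 2 + ((v + 1) / 2 * τ) ^ 2) * δ) ≤ 6 / 5 * a ^ 2 * w ^ 2 := by
  have hk : 49 / 50 ≤ (1 - 2 * w) * (1 + a * w) := by nlinarith [mul_nonneg ha hw0.le]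
  have hτk : τ * ((1 - 2 * w) * (1 + a * w)) = 2 * a * w ^ 2 := by
    linear_combination w * hτ - τ * (1 - 2 * w) * hvw
  have hpτk : (v + 1) / 2 * τ * ((1 - 2 * w) * (1 + a * w)) = a * w * (1 + w) := by
    linear_combination (v + 1) / 2 * hτk + a * w * hvw
  have hτ0 : 0 ≤ τ := by nlinarith [mul_nonneg ha (pow_pos hw0 2).le]
  have hτle : τ ≤ 41 / 20 * (a * w ^ 2) := by nlinarith [mul_nonneg ha (pow_pos hw0 2).le]
  have hpτ0 : 0 ≤ (v + 1) / 2 * τ := by nlinarith [mul_nonneg ha hw0.le]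
  have hpτle : (v + 1) / 2 * τ ≤ 21 / 20 * (a * w) := by nlinarith [mul_nonneg ha hw0.le]
  have hR : (v + 1) / 2 * τ ^ 2 + ((v + 1) / 2 * τ) ^ 2 ≤ 113 / 100 * (a ^ 2 * w ^ 2) := by
    have h1 := mul_le_mul hpτle hτle hτ0 (by positivity)
    have h2 := pow_le_pow_left₀ hpτ0 hpτle 2
    have h3 : a ^ 2 * w ^ 3 ≤ a ^ 2 * w ^ 2 / 100 := by
      rw [pow_succ]; nlinarith [mul_nonneg (sq_nonneg a) (sq_nonneg w)]
    nlinarith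
  have hR0 : 0 ≤ (v + 1) / 2 * τ ^ 2 + ((v + 1) / 2 * τ) ^ 2 := by
    nlinarith [mul_nonneg hpτ0 hτ0]
  calc v * (((v + 1) / 2 * τ ^ 2 + ((v + 1) / 2 * τ) ^ 2) * δ)
      = (v * δ) * ((v + 1) / 2 * τ ^ 2 + ((v + 1) / 2 * τ) ^ 2) := by ring
    _ ≤ 51 / 50 * (113 / 100 * (a ^ 2 * w ^ 2)) := mul_le_mul hvδ hR hR0 (by norm_num)
    _ ≤ 6 / 5 * a ^ 2 * w ^ 2 := by nlinarith [mul_nonneg (sq_nonneg a) (sq_nonneg w)]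

end Expansion

theorem G_sub_expansion_bounds {v y : ℝ} (hv : 100 ≤ v) (hyv : 8 * y ^ 2 ≤ v) :
    -(5 / 2 * y ^ 2 / v ^ 2) ≤ G v y - 1 - (3 - y ^ 2) / (2 * v) ∧
      G v y - 1 - (3 - y ^ 2) / (2 * v) ≤ (21 + 17 / 10 * y ^ 4) / v ^ 2 := by
  have hv0 : 0 < v := by linarith
  set a := y ^ 2 with ha
  have ha0 : 0 ≤ a := sq_nonneg y
  set w := v⁻¹ with hw_def
  have hvw : v * w = 1 := mul_inv_cancel₀ hv0.ne'
  have hw0 : 0 < w := inv_pos.mpr hv0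
  have hw : w ≤ 1 / 100 := by rw [hw_def, one_div]; exact inv_anti₀ (by norm_num) hv
  have haw : a * w ≤ 1 / 8 := by nlinarith
  set X := √(v / (v - 2)) with hX_def
  have hX0 : 0 ≤ X := sqrt_nonneg _
  have hX : X ^ 2 * (1 - 2 * w) = 1 := by
    have hv2 : v - 2 ≠ 0 := by linarith
    rw [hX_def, sq_sqrt (div_nonneg hv0.le (by linarith)), hw_def]
    field_simp
  obtain ⟨hδlo, hδhi⟩ := sub_one_bounds_of_sq_mul_eq_one hw0 hw hX0 hX
  obtain ⟨hclo, hchi⟩ := half_succ_mul_div_add_bounds ha0 hv0 hvw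
  have hτ : a * (X ^ 2 - 1) / (v + a) * ((1 - 2 * w) * (v + a)) = 2 * a * w := by
    field_simp
    linear_combination a * hX
  obtain ⟨hlo, hhi⟩ := integral_div_rpow_bounds (p := (v + 1) / 2) hv0 ha0 (by linarith)
    (by linarith [pow_pos hw0 2] : 1 ≤ X) le_rfl
  have hvδlo : 1 + 3 / 2 * w ≤ v * (X - 1) := by
    nlinarith [mul_le_mul_of_nonneg_left hδlo hv0.le]
  have hvδhi : v * (X - 1) ≤ 1 + 3 / 2 * w + 21 * w ^ 2 := by
    nlinarith [mul_le_mul_of_nonneg_left hδhi hv0.le]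
  have hE_hi := cubic_term_le ha0 hw0 hw hvw (by positivity) hchi
    (by linarith [pow_pos hw0 2]) hδhi
  have hE_lo := le_cubic_term ha0 hw0 haw hvw hclo hδlo
  have hT := remainder_le (δ := X - 1) ha0 hw0 hw hvw hτ (by nlinarith)
  have hG : G v y = v * ∫ x in (1 : ℝ)..X, ((v + a) / (v + a * x ^ 2)) ^ ((v + 1) / 2) := rfl
  have hGlo := hG ▸ mul_le_mul_of_nonneg_left hlo hv0.le
  have hGhi := hG ▸ mul_le_mul_of_nonneg_left hhi hv0.le
  have e1 : (3 - a) / (2 * v) = 3 / 2 * w - a * w / 2 := by rw [hw_def]; ring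
  have e2 : 5 / 2 * a / v ^ 2 = 5 / 2 * a * w ^ 2 := by rw [hw_def]; ring
  have e3 : (21 + 17 / 10 * y ^ 4) / v ^ 2 = (21 + 17 / 10 * a ^ 2) * w ^ 2 := by
    rw [hw_def, ha]; ring
  rw [e1, e2, e3]
  constructor <;> linarith

theorem stmt_12_general (y C₁ C₂ C₃ V₁ V₂ V₃ : ℝ)
    (hy : 1 < y)
    (hC₁ : C₁ = 2 * y ^ 6 + (3 / 4) * y ^ 4)
    (hC₂ : C₂ = (9 / 4) * C₁ + (25 / 32) * y ^ 8
        + (3 / 2) * (C₁ ^ ((2 : ℝ) / 3) * y ^ ((8 : ℝ) / 3)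
          + C₁ ^ ((1 : ℝ) / 3) * y ^ ((16 : ℝ) / 3)))
    (hC₃ : C₃ = (13 / 3) * y ^ 4 + 18 * y ^ 2 + 2 * C₂ + 11)
    (hV₁ : V₁ = max 100 (8 * y ^ 2))
    (hV₂ : V₂ = max V₁ (max ((3 / 2) * y ^ 4) (Real.sqrt (2 * C₁))))
    (hV₃ : V₃ = max V₂ (max (2 + 2 * y ^ 2 / (1 + 2 * y))
        (2 + 2 * y ^ 4 / (1 + 2 * y ^ 2)))) :
    ∀ v : ℝ, V₃ ≤ v →
      |G v y - 1 - (3 - y ^ 2) / (2 * v)| < C₃ / v ^ 2 := by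
  intro v hv
  rw [hV₃, hV₂, hV₁] at hv
  simp only [max_le_iff] at hv
  obtain ⟨⟨⟨hv100, hyv⟩, -⟩, -⟩ := hv
  obtain ⟨hlo, hhi⟩ := G_sub_expansion_bounds hv100 hyv
  have hC₂0 : 0 ≤ C₂ := by rw [hC₂, hC₁]; positivity
  have hlt₁ : 5 / 2 * y ^ 2 / v ^ 2 < C₃ / v ^ 2 := by
    gcongr; nlinarith
  have hlt₂ : (21 + 17 / 10 * y ^ 4) / v ^ 2 < C₃ / v ^ 2 := by
    gcongr; nlinarith
  rw [abs_lt]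
  constructor <;> linarith

theorem stmt_12 (y a C₁ C₂ C₃ V₁ V₂ V₃ : ℝ)
    (hy : 1 < y) (hy3 : y ≠ Real.sqrt 3)
    (ha : a = y ^ 2)
    (hC₁ : C₁ = 2 * y ^ 6 + (3 / 4) * y ^ 4)
    (hC₂ : C₂ = (9 / 4) * C₁ + (25 / 32) * y ^ 8
        + (3 / 2) * (C₁ ^ ((2 : ℝ) / 3) * y ^ ((8 : ℝ) / 3)
          + C₁ ^ ((1 : ℝ) / 3) * y ^ ((16 : ℝ) / 3)))
    (hC₃ : C₃ = (13 / 3) * y ^ 4 + 18 * y ^ 2 + 2 * C₂ + 11)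
    (hV₁ : V₁ = max 100 (8 * y ^ 2))
    (hV₂ : V₂ = max V₁ (max ((3 / 2) * y ^ 4) (Real.sqrt (2 * C₁))))
    (hV₃ : V₃ = max V₂ (max (2 + 2 * y ^ 2 / (1 + 2 * y))
        (2 + 2 * y ^ 4 / (1 + 2 * y ^ 2)))) :
    ∀ v : ℝ, V₃ ≤ v →
      |G v y - 1 - (3 - y ^ 2) / (2 * v)| < C₃ / v ^ 2 :=
  stmt_12_general y C₁ C₂ C₃ V₁ V₂ V₃ hy hC₁ hC₂ hC₃ hV₁ hV₂ hV₃
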